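/- Assume 2K cos α₄ − 2cos α₂ + 4r cos 2α₂ < 0 and −2K cos α₄ + 2cos α₂ + 4r cos 2α₂ > 0. Let ψ : ℝ → ℝ³ be a differentiable solution of ψ′(t) = F(ψ(t)) with ψ(0) = (s, π, 0) for some s ∈ (0, π). Then for all t ∈ ℝ, ψ(t) = (χ(t), π, 0) with χ(t) ∈ (0, π), and ψ(t) → (0, π, 0) as t → +∞ while ψ(t) → (π, π, 0) as t → −∞; that is, ψ is a heteroclinic trajectory from the equilibrium D D S = (π,π,0) to the equilibrium S D S = (0,π,0). -/

import Mathlib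

open Real Filter

/-- Odd part of the pairwise coupling function: `ḡ₂(ϑ) = −cos α₂ sin ϑ + r cos 2α₂ sin 2ϑ`. -/
noncomputable def gbar2 (α₂ r : ℝ) (ϑ : ℝ) : ℝ :=
  -cos α₂ * sin ϑ + r * cos (2 * α₂) * sin (2 * ϑ)

/-- Odd part of the interpopulation coupling function: `ḡ₄(ϑ) = −cos α₄ sin ϑ`. -/
noncomputable def gbar4 (α₄ : ℝ) (ϑ : ℝ) : ℝ := -cos α₄ * sin ϑ

/-- The reduced phase-difference vector field for M = 3 populations of N = 2 oscillators
(indices taken cyclically in `Fin 3`). -/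
noncomputable def F (α₂ α₄ r K : ℝ) (ψ : Fin 3 → ℝ) : Fin 3 → ℝ := fun σ =>
  2 * gbar2 α₂ r (ψ σ)
    - K / 2 * (gbar4 α₄ (ψ (σ - 1) + ψ σ) + gbar4 α₄ (ψ σ - ψ (σ - 1)))
    + K / 2 * (gbar4 α₄ (ψ (σ + 1) + ψ σ) + gbar4 α₄ (ψ σ - ψ (σ + 1)))

lemma sin_diff_le (x y : ℝ) : |sin x - sin y| ≤ |x - y| := by
  rw [Real.sin_sub_sin]
  have h1 : |sin ((x - y) / 2)| ≤ |(x - y) / 2| := Real.abs_sin_le_abs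
  have h2 : |cos ((x + y) / 2)| ≤ 1 := Real.abs_cos_le_one _
  calc |2 * sin ((x - y) / 2) * cos ((x + y) / 2)|
      = 2 * |sin ((x - y) / 2)| * |cos ((x + y) / 2)| := by
        rw [abs_mul, abs_mul]; norm_num
    _ ≤ 2 * |(x - y) / 2| * 1 :=
        mul_le_mul (by linarith) h2 (abs_nonneg _) (by positivity)
    _ = |x - y| := by rw [abs_div]; norm_num; linarith [abs_nonneg (x - y)]

lemma scalar_lipschitz (a b : ℝ) :
    LipschitzWith ⟨|a| + 2 * |b|, by positivity⟩ (fun x => a * sin x + b * sin (2 * x)) := by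
  apply LipschitzWith.of_dist_le_mul
  intro x y
  change _ ≤ (|a| + 2 * |b|) * dist x y
  rw [Real.dist_eq, Real.dist_eq]
  have e1 : |sin x - sin y| ≤ |x - y| := sin_diff_le _ _
  have e2 : |sin (2*x) - sin (2*y)| ≤ 2 * |x - y| := by
    refine (sin_diff_le _ _).trans ?_
    rw [show 2*x - 2*y = 2*(x - y) by ring, abs_mul]; norm_num
  calc |a * sin x + b * sin (2*x) - (a * sin y + b * sin (2*y))|
      = |a * (sin x - sin y) + b * (sin (2*x) - sin (2*y))| := by ring_nf
    _ ≤ |a * (sin x - sin y)| + |b * (sin (2*x) - sin (2*y))| := abs_add_le _ _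
    _ ≤ |a| * |x - y| + |b| * (2 * |x - y|) := by
        rw [abs_mul, abs_mul]
        exact add_le_add (mul_le_mul_of_nonneg_left e1 (abs_nonneg _))
          (mul_le_mul_of_nonneg_left e2 (abs_nonneg _))
    _ = (|a| + 2 * |b|) * |x - y| := by ring

lemma scalar_tendsto {g : ℝ → ℝ} (hg : Continuous g) {χ : ℝ → ℝ}
    (hχ : ∀ t, HasDerivAt χ (g (χ t)) t)
    (hmem : ∀ t, χ t ∈ Set.Ioo 0 π)
    (hneg : ∀ x ∈ Set.Ioo 0 π, g x < 0) :
    Tendsto χ atTop (nhds 0) := by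
  have hdiff : Differentiable ℝ χ := fun t => (hχ t).differentiableAt
  have hderiv : ∀ t, deriv χ t = g (χ t) := fun t => (hχ t).deriv
  have hanti : Antitone χ := antitone_of_deriv_nonpos hdiff
    (fun t => by rw [hderiv]; exact (hneg _ (hmem t)).le)
  have hbdd : BddBelow (Set.range χ) := ⟨0, by rintro y ⟨t, rfl⟩; exact (hmem t).1.le⟩
  set L := ⨅ t, χ t with hLdef
  have hlim : Tendsto χ atTop (nhds L) := tendsto_atTop_ciInf hanti hbdd
  have hL0 : 0 ≤ L := le_ciInf fun t => (hmem t).1.le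
  have hLle : ∀ t, L ≤ χ t := fun t => ciInf_le hbdd t
  suffices hL : L = 0 by rwa [hL] at hlim
  by_contra hL
  have hLpos : 0 < L := lt_of_le_of_ne hL0 (Ne.symm hL)
  set s0 := χ 0 with hs0
  have hLs0 : L ≤ s0 := hLle 0
  have hsub : Set.Icc L s0 ⊆ Set.Ioo 0 π := fun x hx =>
    ⟨lt_of_lt_of_le hLpos hx.1, lt_of_le_of_lt hx.2 (hmem 0).2⟩
  obtain ⟨xm, hxm, hmax⟩ := isCompact_Icc.exists_isMaxOn (Set.nonempty_Icc.2 hLs0)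
    hg.continuousOn
  set ε := -g xm with hε
  have hεpos : 0 < ε := by
    have := hneg xm (hsub hxm); simp only [hε]; linarith
  have hbound : ∀ t, 0 ≤ t → g (χ t) ≤ -ε := by
    intro t ht
    have hmemI : χ t ∈ Set.Icc L s0 := ⟨hLle t, hanti ht⟩
    have h2 : g (χ t) ≤ g xm := hmax hmemI
    simp only [hε]; linarith
  have hder2 : ∀ t, HasDerivAt (fun u => χ u + ε * u) (g (χ t) + ε) t := by
    intro t
    exact (hχ t).add (by simpa using (hasDerivAt_id t).const_mul ε)
  have hha : AntitoneOn (fun u => χ u + ε * u) (Set.Ici 0) := by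
    apply antitoneOn_of_deriv_nonpos (convex_Ici 0)
      (Continuous.continuousOn (hdiff.continuous.add (continuous_const.mul continuous_id)))
      (fun t _ => ((hder2 t).differentiableAt).differentiableWithinAt)
    intro t ht
    rw [interior_Ici] at ht
    show deriv (fun u => χ u + ε * u) t ≤ 0
    rw [(hder2 t).deriv]
    linarith [hbound t (le_of_lt ht)]
  set T := max 1 ((s0 + 1) / ε) with hT
  have hT0 : (0:ℝ) ≤ T := le_trans zero_le_one (le_max_left _ _)
  have hTge : (s0 + 1) / ε ≤ T := le_max_right _ _
  have hεT : s0 + 1 ≤ ε * T := by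
    rw [div_le_iff₀ hεpos] at hTge; linarith
  have := hha (Set.self_mem_Ici) (Set.mem_Ici.2 hT0) hT0
  have hχT : 0 < χ T := (hmem T).1
  simp only [mul_zero] at this
  linarith

lemma Fsymm (α₂ α₄ r K : ℝ) (x : Fin 3 → ℝ) :
    F α₂ α₄ r K ![x 0, 2*π - x 1, -(x 2)] =
      ![F α₂ α₄ r K x 0, -(F α₂ α₄ r K x 1), -(F α₂ α₄ r K x 2)] := by
  funext σ
  fin_cases σ <;>
    simp [F, gbar2, gbar4, Fin.isValue, show (0:Fin 3) - 1 = 2 by decide,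
      show (0:Fin 3) + 1 = 1 by decide, show (1:Fin 3) - 1 = 0 by decide,
      show (1:Fin 3) + 1 = 2 by decide, show (2:Fin 3) - 1 = 1 by decide,
      show (2:Fin 3) + 1 = 0 by decide, sub_eq_add_neg, sin_add, cos_add,
      sin_two_pi, cos_two_pi, sin_neg, cos_neg, Real.sin_two_mul, Real.cos_two_mul] <;>
    ring

lemma F_on_line (α₂ α₄ r K : ℝ) (x : Fin 3 → ℝ) (h1 : x 1 = π) (h2 : x 2 = 0) :
    F α₂ α₄ r K x 0 = (2*K*cos α₄ - 2*cos α₂) * sin (x 0) + 2*r*cos (2*α₂) * sin (2 * x 0) := by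
  simp [F, gbar2, gbar4, show (0:Fin 3) - 1 = 2 by decide, show (0:Fin 3) + 1 = 1 by decide,
    h1, h2, sin_add, cos_add, sin_pi, cos_pi]
  ring

lemma F_lipschitz (α₂ α₄ r K : ℝ) :
    LipschitzWith ⟨2 * |cos α₂| + 4 * |r * cos (2*α₂)| + 4 * |K| * |cos α₄|, by positivity⟩
      (F α₂ α₄ r K) := by
  apply LipschitzWith.of_dist_le_mul
  intro x y
  set d := dist x y with hd
  have hd0 : 0 ≤ d := dist_nonneg
  change _ ≤ (2 * |cos α₂| + 4 * |r * cos (2*α₂)| + 4 * |K| * |cos α₄|) * d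
  rw [dist_pi_le_iff (by positivity)]
  intro σ
  have hτ : ∀ τ : Fin 3, |x τ - y τ| ≤ d := by
    intro τ; rw [← Real.dist_eq]; exact dist_le_pi_dist x y τ
  have e1 : |sin (x σ) - sin (y σ)| ≤ d := (sin_diff_le _ _).trans (hτ σ)
  have e2 : |sin (2 * x σ) - sin (2 * y σ)| ≤ 2 * d := by
    refine (sin_diff_le _ _).trans ?_
    have : |2 * x σ - 2 * y σ| = 2 * |x σ - y σ| := by
      rw [show 2 * x σ - 2 * y σ = 2 * (x σ - y σ) by ring, abs_mul]; norm_num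
    rw [this]; linarith [hτ σ]
  have epair : ∀ τ : Fin 3,
      |sin (x τ + x σ) - sin (y τ + y σ)| ≤ 2 * d ∧
      |sin (x σ - x τ) - sin (y σ - y τ)| ≤ 2 * d := by
    intro τ
    constructor
    · refine (sin_diff_le _ _).trans ?_
      calc |x τ + x σ - (y τ + y σ)| = |(x τ - y τ) + (x σ - y σ)| := by ring_nf
        _ ≤ |x τ - y τ| + |x σ - y σ| := abs_add_le _ _
        _ ≤ 2 * d := by linarith [hτ τ, hτ σ]
    · refine (sin_diff_le _ _).trans ?_
      calc |x σ - x τ - (y σ - y τ)| = |(x σ - y σ) - (x τ - y τ)| := by ring_nf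
        _ ≤ |x σ - y σ| + |x τ - y τ| := abs_sub _ _
        _ ≤ 2 * d := by linarith [hτ τ, hτ σ]
  obtain ⟨e3, e4⟩ := epair (σ - 1)
  obtain ⟨e5, e6⟩ := epair (σ + 1)
  have expand : F α₂ α₄ r K x σ - F α₂ α₄ r K y σ =
      (-2 * cos α₂) * (sin (x σ) - sin (y σ))
      + (2 * (r * cos (2*α₂))) * (sin (2 * x σ) - sin (2 * y σ))
      + (K/2) * (cos α₄ * ((sin (x (σ-1) + x σ) - sin (y (σ-1) + y σ))
                  + (sin (x σ - x (σ-1)) - sin (y σ - y (σ-1)))))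
      + (-(K/2)) * (cos α₄ * ((sin (x (σ+1) + x σ) - sin (y (σ+1) + y σ))
                  + (sin (x σ - x (σ+1)) - sin (y σ - y (σ+1))))) := by
    simp [F, gbar2, gbar4]; ring
  have hdist : dist (F α₂ α₄ r K x σ) (F α₂ α₄ r K y σ)
      = |F α₂ α₄ r K x σ - F α₂ α₄ r K y σ| := Real.dist_eq _ _
  rw [hdist, expand]
  have b1 : |(-2 * cos α₂) * (sin (x σ) - sin (y σ))| ≤ 2 * |cos α₂| * d := by
    rw [abs_mul]
    have : |(-2 : ℝ) * cos α₂| = 2 * |cos α₂| := by rw [abs_mul]; norm_num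
    rw [this]
    exact mul_le_mul_of_nonneg_left e1 (by positivity)
  have b2 : |(2 * (r * cos (2*α₂))) * (sin (2 * x σ) - sin (2 * y σ))|
      ≤ 2 * |r * cos (2*α₂)| * (2 * d) := by
    rw [abs_mul]
    have : |(2 : ℝ) * (r * cos (2*α₂))| = 2 * |r * cos (2*α₂)| := by rw [abs_mul]; norm_num
    rw [this]
    exact mul_le_mul_of_nonneg_left e2 (by positivity)
  have bpair : ∀ (c : ℝ) (u v : ℝ), |u| ≤ 2*d → |v| ≤ 2*d →
      |c * (cos α₄ * (u + v))| ≤ |c| * (|cos α₄| * (4 * d)) := by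
    intro c u v hu hv
    rw [abs_mul, abs_mul]
    refine mul_le_mul_of_nonneg_left (mul_le_mul_of_nonneg_left ?_ (abs_nonneg _)) (abs_nonneg _)
    calc |u + v| ≤ |u| + |v| := abs_add_le _ _
      _ ≤ 4 * d := by linarith
  have b3 := bpair (K/2) _ _ e3 e4
  have b4 := bpair (-(K/2)) _ _ e5 e6
  have hK2 : |K / 2| = |K| / 2 := by rw [abs_div]; norm_num
  have hK2' : |(-(K / 2))| = |K| / 2 := by rw [abs_neg, abs_div]; norm_num
  rw [hK2] at b3; rw [hK2'] at b4
  calc |(-2 * cos α₂) * (sin (x σ) - sin (y σ))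
      + (2 * (r * cos (2*α₂))) * (sin (2 * x σ) - sin (2 * y σ))
      + (K/2) * (cos α₄ * ((sin (x (σ-1) + x σ) - sin (y (σ-1) + y σ))
                  + (sin (x σ - x (σ-1)) - sin (y σ - y (σ-1)))))
      + (-(K/2)) * (cos α₄ * ((sin (x (σ+1) + x σ) - sin (y (σ+1) + y σ))
                  + (sin (x σ - x (σ+1)) - sin (y σ - y (σ+1)))))|
      ≤ |(-2 * cos α₂) * (sin (x σ) - sin (y σ))
      + (2 * (r * cos (2*α₂))) * (sin (2 * x σ) - sin (2 * y σ))
      + (K/2) * (cos α₄ * ((sin (x (σ-1) + x σ) - sin (y (σ-1) + y σ))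
                  + (sin (x σ - x (σ-1)) - sin (y σ - y (σ-1)))))|
      + |(-(K/2)) * (cos α₄ * ((sin (x (σ+1) + x σ) - sin (y (σ+1) + y σ))
                  + (sin (x σ - x (σ+1)) - sin (y σ - y (σ+1)))))| := abs_add_le _ _
    _ ≤ (|(-2 * cos α₂) * (sin (x σ) - sin (y σ))|
      + |(2 * (r * cos (2*α₂))) * (sin (2 * x σ) - sin (2 * y σ))|
      + |(K/2) * (cos α₄ * ((sin (x (σ-1) + x σ) - sin (y (σ-1) + y σ))
                  + (sin (x σ - x (σ-1)) - sin (y σ - y (σ-1)))))|)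
      + |(-(K/2)) * (cos α₄ * ((sin (x (σ+1) + x σ) - sin (y (σ+1) + y σ))
                  + (sin (x σ - x (σ+1)) - sin (y σ - y (σ+1)))))| := by
        gcongr
        exact abs_add_three _ _ _
    _ ≤ (2 * |cos α₂| * d + 2 * |r * cos (2*α₂)| * (2 * d) + |K|/2 * (|cos α₄| * (4 * d)))
        + |K|/2 * (|cos α₄| * (4 * d)) :=
        add_le_add (add_le_add (add_le_add b1 b2) b3) b4
    _ = (2 * |cos α₂| + 4 * |r * cos (2*α₂)| + 4 * |K| * |cos α₄|) * d := by ring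

/-- Under the eigenvalue conditions `λ₃^{DSS} < 0` and `λ₁^{DDS} > 0`, every solution
starting at `(s, π, 0)` with `s ∈ (0, π)` stays on the invariant line segment
`{(χ, π, 0) : χ ∈ (0, π)}` and is a heteroclinic trajectory from `D D S = (π,π,0)`
to `S D S = (0,π,0)`. -/
theorem heteroclinic_DDS_to_SDS (α₂ α₄ r K : ℝ) (hK : 0 < K)
    (h₁ : 2 * K * cos α₄ - 2 * cos α₂ + 4 * r * cos (2 * α₂) < 0)
    (h₂ : -2 * K * cos α₄ + 2 * cos α₂ + 4 * r * cos (2 * α₂) > 0)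
    (ψ : ℝ → Fin 3 → ℝ)
    (hode : ∀ t : ℝ, HasDerivAt ψ (F α₂ α₄ r K (ψ t)) t)
    (s : ℝ) (hs : s ∈ Set.Ioo 0 π)
    (hinit : ψ 0 = ![s, π, 0]) :
    (∀ t : ℝ, ψ t 1 = π ∧ ψ t 2 = 0 ∧ ψ t 0 ∈ Set.Ioo 0 π) ∧
    Tendsto ψ atTop (nhds ![0, π, 0]) ∧
    Tendsto ψ atBot (nhds ![π, π, 0]) := by
  obtain ⟨hs0, hsπ⟩ := hs
  have hFlip := F_lipschitz α₂ α₄ r K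
  have hv : ∀ t : ℝ, LipschitzOnWith
      ⟨2 * |cos α₂| + 4 * |r * cos (2*α₂)| + 4 * |K| * |cos α₄|, by positivity⟩
      (fun x => F α₂ α₄ r K x) Set.univ :=
    fun _ => hFlip.lipschitzOnWith
  have hcomp : ∀ (t : ℝ) (i : Fin 3), HasDerivAt (fun u => ψ u i) (F α₂ α₄ r K (ψ t) i) t :=
    fun t => hasDerivAt_pi.1 (hode t)
  -- the reflected solution
  have hTode : ∀ t, HasDerivAt (fun u => ![ψ u 0, 2*π - ψ u 1, -(ψ u 2)])
      (F α₂ α₄ r K ![ψ t 0, 2*π - ψ t 1, -(ψ t 2)]) t := by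
    intro t
    rw [Fsymm]
    apply hasDerivAt_pi.2
    intro i
    fin_cases i
    · simpa using hcomp t 0
    · simp
      exact ((hasDerivAt_const t (2*π)).sub (hcomp t 1)).congr_deriv (by ring)
    · simp
      exact (hcomp t 2).neg
  -- invariance of the line ψ₁ = π, ψ₂ = 0
  have hline : ∀ t : ℝ, ψ t 1 = π ∧ ψ t 2 = 0 := by
    intro t
    have hI : t ∈ Set.Ioo (-(|t|+1)) (|t|+1) :=
      ⟨by linarith [neg_abs_le t], by linarith [le_abs_self t]⟩
    have h0 : (0:ℝ) ∈ Set.Ioo (-(|t|+1)) (|t|+1) :=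
      ⟨by linarith [abs_nonneg t], by linarith [abs_nonneg t]⟩
    have heq0 : ψ 0 = ![ψ 0 0, 2*π - ψ 0 1, -(ψ 0 2)] := by
      rw [hinit]
      funext i
      fin_cases i <;> simp <;> ring
    have key := ODE_solution_unique_of_mem_Ioo (fun t _ => hv t) h0
      (fun u _ => ⟨hode u, trivial⟩)
      (fun u _ => ⟨hTode u, trivial⟩) heq0 hI
    have h1 := congrFun key 1
    have h2 := congrFun key 2
    simp at h1 h2
    constructor
    · linarith
    · linarith
  -- the scalar vector field on the invariant line
  set gf : ℝ → ℝ := fun x => (2*K*cos α₄ - 2*cos α₂) * sin x + 2*r*cos (2*α₂) * sin (2 * x)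
    with hgf
  have hχ : ∀ t, HasDerivAt (fun u => ψ u 0) (gf (ψ t 0)) t := by
    intro t
    have := hcomp t 0
    rwa [F_on_line _ _ _ _ _ (hline t).1 (hline t).2] at this
  have hgcont : Continuous gf := by
    apply Continuous.add
    · exact continuous_const.mul Real.continuous_sin
    · exact continuous_const.mul (Real.continuous_sin.comp (continuous_const.mul continuous_id))
  have hg0 : gf 0 = 0 := by simp [hgf]
  have hgπ : gf π = 0 := by simp [hgf, Real.sin_two_pi]
  have hψ00 : ψ 0 0 = s := by rw [hinit]; simp
  have hvg : ∀ t : ℝ, LipschitzOnWith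
      ⟨|2*K*cos α₄ - 2*cos α₂| + 2 * |2*r*cos (2*α₂)|, by positivity⟩
      (fun x => gf x) Set.univ :=
    fun _ => (scalar_lipschitz (2*K*cos α₄ - 2*cos α₂) (2*r*cos (2*α₂))).lipschitzOnWith
  -- the solution cannot touch 0 or π
  have huniq : ∀ (t c : ℝ), gf c = 0 → ψ t 0 = c → s = c := by
    intro t c hc h
    have hI : t ∈ Set.Ioo (-(|t|+1)) (|t|+1) :=
      ⟨by linarith [neg_abs_le t], by linarith [le_abs_self t]⟩
    have h0 : (0:ℝ) ∈ Set.Ioo (-(|t|+1)) (|t|+1) :=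
      ⟨by linarith [abs_nonneg t], by linarith [abs_nonneg t]⟩
    have key := ODE_solution_unique_of_mem_Ioo (fun t _ => hvg t) hI
      (fun u _ => ⟨hχ u, trivial⟩)
      (fun u _ => ⟨show HasDerivAt (fun _ : ℝ => c) (gf ((fun _ : ℝ => c) u)) u by
        simpa [hc] using hasDerivAt_const u c, trivial⟩)
      (show ψ t 0 = (fun _ : ℝ => c) t from h)
    have := key h0
    simpa [hψ00] using this
  have hcontχ : Continuous fun u => ψ u 0 :=
    (Differentiable.continuous fun t => (hχ t).differentiableAt)
  have hmem0 : ∀ t, ψ t 0 ∈ Set.Ioo 0 π := by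
    intro t
    by_contra hcon
    rw [Set.mem_Ioo] at hcon
    push_neg at hcon
    rcases le_or_gt (ψ t 0) 0 with hle | hgt
    · have h0mem : (0:ℝ) ∈ Set.uIcc (ψ t 0) (ψ 0 0) := by
        rw [Set.mem_uIcc]
        left; exact ⟨hle, by rw [hψ00]; linarith⟩
      obtain ⟨t', _, ht'⟩ := intermediate_value_uIcc hcontχ.continuousOn
        (show (0:ℝ) ∈ Set.uIcc ((fun u => ψ u 0) t) ((fun u => ψ u 0) 0) from h0mem)
      exact absurd (huniq t' 0 hg0 ht') (by linarith)
    · have hge : π ≤ ψ t 0 := hcon hgt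
      have hπmem : π ∈ Set.uIcc (ψ t 0) (ψ 0 0) := by
        rw [Set.mem_uIcc]
        right; exact ⟨by rw [hψ00]; linarith, hge⟩
      obtain ⟨t', _, ht'⟩ := intermediate_value_uIcc hcontχ.continuousOn
        (show π ∈ Set.uIcc ((fun u => ψ u 0) t) ((fun u => ψ u 0) 0) from hπmem)
      exact absurd (huniq t' π hgπ ht') (by linarith)
  -- negativity of gf on (0, π)
  have hgneg : ∀ x ∈ Set.Ioo 0 π, gf x < 0 := by
    intro x hx
    have hsinx : 0 < sin x := Real.sin_pos_of_pos_of_lt_pi hx.1 hx.2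
    have hc1 : cos x ≤ 1 := Real.cos_le_one x
    have hc2 : -1 ≤ cos x := Real.neg_one_le_cos x
    have hexp : gf x = sin x * ((2*K*cos α₄ - 2*cos α₂) + (4*r*cos (2*α₂)) * cos x) := by
      simp only [hgf]; rw [Real.sin_two_mul]; ring
    rw [hexp]
    apply mul_neg_of_pos_of_neg hsinx
    have habs : (4*r*cos (2*α₂)) * cos x ≤ |4*r*cos (2*α₂)| := by
      calc (4*r*cos (2*α₂)) * cos x ≤ |(4*r*cos (2*α₂)) * cos x| := le_abs_self _
        _ = |4*r*cos (2*α₂)| * |cos x| := abs_mul _ _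
        _ ≤ |4*r*cos (2*α₂)| * 1 :=
            mul_le_mul_of_nonneg_left (Real.abs_cos_le_one x) (abs_nonneg _)
        _ = |4*r*cos (2*α₂)| := mul_one _
    have hmax : (2*K*cos α₄ - 2*cos α₂) + |4*r*cos (2*α₂)| < 0 := by
      rcases abs_cases (4*r*cos (2*α₂)) with ⟨h, _⟩ | ⟨h, _⟩ <;> rw [h] <;> linarith
    linarith
  -- forward limit
  have hfwd : Tendsto (fun u => ψ u 0) atTop (nhds 0) :=
    scalar_tendsto hgcont hχ hmem0 hgneg
  -- backward limit via time reversal and reflection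
  set η : ℝ → ℝ := fun u => π - ψ (-u) 0 with hη
  have hηder : ∀ t, HasDerivAt η (gf (π - η t)) t := by
    intro t
    have h1 : HasDerivAt (fun u => ψ (-u) 0) (gf (ψ (-t) 0) * (-1)) t :=
      (hχ (-t)).comp t (hasDerivAt_neg t)
    have h2 := (hasDerivAt_const t π).sub h1
    have h3 : π - (π - ψ (-t) 0) = ψ (-t) 0 := by ring
    simp only [hη, h3]
    exact h2.congr_deriv (by ring)
  have hηmem : ∀ t, η t ∈ Set.Ioo 0 π := by
    intro t
    have := hmem0 (-t)
    exact ⟨by simp only [hη]; linarith [this.2], by simp only [hη]; linarith [this.1]⟩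
  have hηneg : ∀ x ∈ Set.Ioo 0 π, gf (π - x) < 0 := by
    intro x hx
    exact hgneg (π - x) ⟨by linarith [hx.2], by linarith [hx.1]⟩
  have hηcont : Continuous fun x : ℝ => gf (π - x) :=
    hgcont.comp (continuous_const.sub continuous_id)
  have hηlim : Tendsto η atTop (nhds 0) :=
    scalar_tendsto hηcont hηder hηmem hηneg
  have hbwd0 : Tendsto (fun u => ψ (-u) 0) atTop (nhds π) := by
    have := tendsto_const_nhds.sub hηlim (α := ℝ) (f := fun _ : ℝ => π)
    simpa [hη] using this
  have hbwd : Tendsto (fun t => ψ t 0) atBot (nhds π) := by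
    have := hbwd0.comp tendsto_neg_atBot_atTop
    simpa [Function.comp_def, neg_neg] using this
  refine ⟨fun t => ⟨(hline t).1, (hline t).2, hmem0 t⟩, ?_, ?_⟩
  · rw [tendsto_pi_nhds]
    intro i
    fin_cases i
    · simpa using hfwd
    · have heq : (fun t => ψ t 1) = fun _ => π := funext fun t => (hline t).1
      simpa [heq] using tendsto_const_nhds (α := ℝ) (f := atTop) (x := π)
    · have heq : (fun t => ψ t 2) = fun _ => (0:ℝ) := funext fun t => (hline t).2
      simpa [heq] using tendsto_const_nhds (α := ℝ) (f := atTop) (x := (0:ℝ))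
  · rw [tendsto_pi_nhds]
    intro i
    fin_cases i
    · simpa using hbwd
    · have heq : (fun t => ψ t 1) = fun _ => π := funext fun t => (hline t).1
      simpa [heq] using tendsto_const_nhds (α := ℝ) (f := atBot) (x := π)
    · have heq : (fun t => ψ t 2) = fun _ => (0:ℝ) := funext fun t => (hline t).2
      simpa [heq] using tendsto_const_nhds (α := ℝ) (f := atBot) (x := (0:ℝ))
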